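/- Let p, σ > 0 and n ≥ 0 with n σ / p² < 1. Then ‖f_{p,σ,d}‖_n² ≤ π^{d/2} · exp( n²σ/(p²(1 − nσ/p²)) + n/p² ) · (1 − nσ/p²)^{−d/2} · p^{2n} / σ^{d/2}, where f_{p,σ,d}(x) = e^{i p x₁} e^{−(σ/2)|x|²}. -/

import Mathlib

open MeasureTheory Real Finset
open scoped RealInnerProductSpace

noncomputable section

/-- Fourier transform with normalization (2π)^{-d/2} ∫ e^{-ik·x} f(x) dx. -/
def FT (d : ℕ) (f : EuclideanSpace ℝ (Fin d) → ℂ) (k : EuclideanSpace ℝ (Fin d)) : ℂ :=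
  (((2 * Real.pi) ^ (-(d : ℝ) / 2) : ℝ) : ℂ) *
    ∫ x : EuclideanSpace ℝ (Fin d), Complex.exp (-Complex.I * ((@inner ℝ _ _ k x : ℝ) : ℂ)) * f x

/-- Inverse Fourier transform. -/
def invFT (d : ℕ) (F : EuclideanSpace ℝ (Fin d) → ℂ) (x : EuclideanSpace ℝ (Fin d)) : ℂ :=
  (((2 * Real.pi) ^ (-(d : ℝ) / 2) : ℝ) : ℂ) *
    ∫ k : EuclideanSpace ℝ (Fin d), Complex.exp (Complex.I * ((@inner ℝ _ _ k x : ℝ) : ℂ)) * F k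

/-- Squared Sobolev norm ‖f‖_s² = ∫ (1+|k|²)^s |𝓕f(k)|² dk. -/
def sobNormSq (d : ℕ) (s : ℝ) (f : EuclideanSpace ℝ (Fin d) → ℂ) : ℝ :=
  ∫ k : EuclideanSpace ℝ (Fin d), (1 + ‖k‖ ^ 2) ^ s * ‖FT d f k‖ ^ 2

/-- Sobolev norm. -/
def sobNorm (d : ℕ) (s : ℝ) (f : EuclideanSpace ℝ (Fin d) → ℂ) : ℝ :=
  Real.sqrt (sobNormSq d s f)

/-- Membership in the Sobolev space H^s(ℝ^d, ℂ). -/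
def MemH (d : ℕ) (s : ℝ) (f : EuclideanSpace ℝ (Fin d) → ℂ) : Prop :=
  Integrable (fun k : EuclideanSpace ℝ (Fin d) => (1 + ‖k‖ ^ 2) ^ s * ‖FT d f k‖ ^ 2)

/-- Squared L² norm. -/
def L2NormSq (d : ℕ) (f : EuclideanSpace ℝ (Fin d) → ℂ) : ℝ :=
  ∫ x : EuclideanSpace ℝ (Fin d), ‖f x‖ ^ 2

/-- L² norm. -/
def L2Norm (d : ℕ) (f : EuclideanSpace ℝ (Fin d) → ℂ) : ℝ :=
  Real.sqrt (L2NormSq d f)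

/-- Membership in L²(ℝ^d, ℂ). -/
def MemL2 (d : ℕ) (f : EuclideanSpace ℝ (Fin d) → ℂ) : Prop :=
  Integrable (fun x : EuclideanSpace ℝ (Fin d) => ‖f x‖ ^ 2)

/-- The nonlinear operator 𝓓_m(f) = 𝓕⁻¹((1+|k|²)^{m/2} |𝓕f|). -/
def Dop (d : ℕ) (m : ℝ) (f : EuclideanSpace ℝ (Fin d) → ℂ) :
    EuclideanSpace ℝ (Fin d) → ℂ :=
  invFT d (fun k => (((1 + ‖k‖ ^ 2) ^ (m / 2) * ‖FT d f k‖ : ℝ) : ℂ))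

/-- The constant S_{a,d} = (4π)^{-d/4} √(Γ(a-d/2)/Γ(a)). -/
def Sad (d : ℕ) (a : ℝ) : ℝ :=
  (4 * Real.pi) ^ (-(d : ℝ) / 4) * Real.sqrt (Real.Gamma (a - d / 2) / Real.Gamma a)

/-- E(s) = s^s, E(0) = 1. -/
def Efun (s : ℝ) : ℝ := if s = 0 then 1 else s ^ s

/-- The constant E_{ℓ,a,d}. -/
def Elad (d : ℕ) (a ℓ : ℝ) : ℝ :=
  ((Efun (ℓ / (2 * a)) * Efun (1 / 2 - ℓ / (2 * a))) /
      (Efun (1 / 2 + ℓ / (2 * a)) * Efun (1 - ℓ / (2 * a)))) ^ ((d : ℝ) / 2)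

/-- The sharp constant in ‖fg‖_n ≤ K ‖f‖_a ‖g‖_n. -/
def Kprod (d : ℕ) (n a : ℝ) : ℝ :=
  sInf {K : ℝ | 0 ≤ K ∧ ∀ f g, MemH d a f → MemH d n g →
    sobNorm d n (fun x => f x * g x) ≤ K * sobNorm d a f * sobNorm d n g}

/-- The sharp constant in ‖fg‖_n ≤ K max(‖f‖_a ‖g‖_n, ‖f‖_n ‖g‖_a). -/
def Kmax (d : ℕ) (n a : ℝ) : ℝ :=
  sInf {K : ℝ | 0 ≤ K ∧ ∀ f g, MemH d n f → MemH d n g →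
    sobNorm d n (fun x => f x * g x) ≤
      K * max (sobNorm d a f * sobNorm d n g) (sobNorm d n f * sobNorm d a g)}

end


private lemma gauss_real (d : ℕ) {α : ℝ} (hα : 0 < α) (c : ℝ) (w : EuclideanSpace ℝ (Fin d)) :
    ∫ v : EuclideanSpace ℝ (Fin d), Real.exp (-α * ‖v‖ ^ 2 + c * ⟪w, v⟫) =
      (Real.pi / α) ^ ((d : ℝ) / 2) * Real.exp (c ^ 2 * ‖w‖ ^ 2 / (4 * α)) := by
  have hb : 0 < ((α : ℂ)).re := by simpa using hα
  have key := GaussianFourier.integral_cexp_neg_mul_sq_norm_add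
    (V := EuclideanSpace ℝ (Fin d)) hb (c : ℂ) w
  rw [← Complex.ofReal_inj]
  calc ((∫ v : EuclideanSpace ℝ (Fin d), Real.exp (-α * ‖v‖ ^ 2 + c * ⟪w, v⟫) : ℝ) : ℂ)
      = ∫ v : EuclideanSpace ℝ (Fin d), ((Real.exp (-α * ‖v‖ ^ 2 + c * ⟪w, v⟫) : ℝ) : ℂ) :=
        integral_ofReal.symm
    _ = ∫ v : EuclideanSpace ℝ (Fin d), Complex.exp (-(α:ℂ) * (‖v‖:ℂ) ^ 2 + (c:ℂ) * ((⟪w, v⟫ : ℝ) : ℂ)) := by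
        congr 1; ext v
        rw [Complex.ofReal_exp]
        norm_cast
    _ = ((Real.pi / α) ^ ((d : ℝ) / 2) * Real.exp (c ^ 2 * ‖w‖ ^ 2 / (4 * α)) : ℝ) := by
        rw [key]
        have hfr : (Module.finrank ℝ (EuclideanSpace ℝ (Fin d)) : ℂ) = (d : ℂ) := by
          simp [finrank_euclideanSpace_fin]
        rw [hfr]
        rw [show ((d:ℂ)/2) = (((d:ℝ)/2 : ℝ) : ℂ) by push_cast; ring,
          show ((Real.pi:ℂ)/(α:ℂ)) = ((Real.pi/α : ℝ) : ℂ) by push_cast; ring,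
          ← Complex.ofReal_cpow (by positivity),
          show ((c:ℂ)^2 * (‖w‖:ℂ)^2/(4*(α:ℂ))) = ((c^2*‖w‖^2/(4*α) : ℝ) : ℂ) by push_cast; ring,
          ← Complex.ofReal_exp]
        push_cast
        ring

private lemma gauss_integrable (d : ℕ) {α : ℝ} (hα : 0 < α) (c : ℝ) (w : EuclideanSpace ℝ (Fin d)) :
    Integrable (fun v : EuclideanSpace ℝ (Fin d) => Real.exp (-α * ‖v‖ ^ 2 + c * ⟪w, v⟫)) := by
  have hb : 0 < ((α : ℂ)).re := by simpa using hα
  have key := (GaussianFourier.integrable_cexp_neg_mul_sq_norm_add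
    (V := EuclideanSpace ℝ (Fin d)) hb (c : ℂ) w).norm
  apply key.congr
  filter_upwards with v
  have : (-(α:ℂ) * (‖v‖:ℂ) ^ 2 + (c:ℂ) * ((⟪w, v⟫ : ℝ) : ℂ)) = ((-α * ‖v‖ ^ 2 + c * ⟪w, v⟫ : ℝ) : ℂ) := by
    push_cast; ring
  rw [this, Complex.norm_exp, Complex.ofReal_re]

private lemma FT_gauss (d : ℕ) (hd : 0 < d) (p σ : ℝ) (hp : 0 < p) (hσ : 0 < σ)
    (k : EuclideanSpace ℝ (Fin d)) :
    FT d (fun x => Complex.exp (Complex.I * (p : ℂ) * ((x ⟨0, hd⟩ : ℝ) : ℂ)) *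
        Complex.exp (((-(σ / 2) * ‖x‖ ^ 2 : ℝ) : ℂ))) k =
      ((σ⁻¹ ^ ((d : ℝ) / 2) *
        Real.exp (-‖k - p • EuclideanSpace.single ⟨0, hd⟩ (1:ℝ)‖ ^ 2 / (2 * σ)) : ℝ) : ℂ) := by
  set e₀ : EuclideanSpace ℝ (Fin d) := EuclideanSpace.single ⟨0, hd⟩ (1:ℝ) with he₀
  have hb : 0 < (((σ/2 : ℝ) : ℂ)).re := by simpa using (by positivity : (0:ℝ) < σ/2)
  have h1 : ∀ x : EuclideanSpace ℝ (Fin d),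
      Complex.exp (-Complex.I * ((⟪k, x⟫ : ℝ) : ℂ)) *
        (Complex.exp (Complex.I * (p : ℂ) * ((x ⟨0, hd⟩ : ℝ) : ℂ)) *
          Complex.exp (((-(σ / 2) * ‖x‖ ^ 2 : ℝ) : ℂ)))
      = Complex.exp (-((σ/2 : ℝ) : ℂ) * (‖x‖ : ℂ) ^ 2 +
          Complex.I * ((⟪p • e₀ - k, x⟫ : ℝ) : ℂ)) := by
    intro x
    rw [← Complex.exp_add, ← Complex.exp_add]
    congr 1
    have hinn : ⟪p • e₀ - k, x⟫ = p * x ⟨0, hd⟩ - ⟪k, x⟫ := by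
      rw [inner_sub_left, real_inner_smul_left, he₀, EuclideanSpace.inner_single_left]
      simp
    rw [hinn]
    push_cast
    ring
  rw [FT]
  simp only [h1]
  rw [GaussianFourier.integral_cexp_neg_mul_sq_norm_add (V := EuclideanSpace ℝ (Fin d)) hb
    Complex.I (p • e₀ - k)]
  have hfr : (Module.finrank ℝ (EuclideanSpace ℝ (Fin d)) : ℂ) = (d : ℂ) := by
    simp [finrank_euclideanSpace_fin]
  rw [hfr]
  have hnrm : ‖p • e₀ - k‖ = ‖k - p • e₀‖ := norm_sub_rev _ _
  have h2 : (Complex.I ^ 2 * (‖p • e₀ - k‖ : ℂ) ^ 2 / (4 * ((σ/2 : ℝ) : ℂ)))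
      = ((-‖k - p • e₀‖ ^ 2 / (2 * σ) : ℝ) : ℂ) := by
    rw [Complex.I_sq]
    rw [← hnrm]
    push_cast
    field_simp
    ring
  rw [h2]
  have h3 : ((Real.pi : ℂ) / ((σ/2 : ℝ) : ℂ)) ^ ((d : ℂ) / 2)
      = (((2 * Real.pi / σ) ^ ((d : ℝ) / 2) : ℝ) : ℂ) := by
    rw [show ((Real.pi : ℂ) / ((σ/2 : ℝ) : ℂ)) = ((2 * Real.pi / σ : ℝ) : ℂ) by
        push_cast; field_simp,
      show ((d : ℂ) / 2) = (((d : ℝ) / 2 : ℝ) : ℂ) by push_cast; ring,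
      ← Complex.ofReal_cpow (by positivity)]
  rw [h3, ← Complex.ofReal_exp]
  rw [← Complex.ofReal_mul, ← Complex.ofReal_mul, Complex.ofReal_inj]
  rw [← mul_assoc]
  congr 1
  rw [show -(d:ℝ)/2 = -((d:ℝ)/2) by ring, Real.rpow_neg (by positivity),
    ← Real.inv_rpow (by positivity), ← Real.mul_rpow (by positivity) (by positivity)]
  congr 1
  field_simp

set_option maxHeartbeats 1000000 in
theorem stmt_19 (d : ℕ) (hd : 0 < d) (p σ n : ℝ) (hp : 0 < p) (hσ : 0 < σ)
    (hn : 0 ≤ n) (hsmall : n * σ / p ^ 2 < 1) :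
    sobNormSq d n (fun x => Complex.exp (Complex.I * (p : ℂ) * ((x ⟨0, hd⟩ : ℝ) : ℂ)) *
        Complex.exp (((-(σ / 2) * ‖x‖ ^ 2 : ℝ) : ℂ))) ≤
      Real.pi ^ ((d : ℝ) / 2) *
        Real.exp (n ^ 2 * σ / (p ^ 2 * (1 - n * σ / p ^ 2)) + n / p ^ 2) *
        (1 - n * σ / p ^ 2) ^ (-(d : ℝ) / 2) *
        p ^ (2 * n) / σ ^ ((d : ℝ) / 2) := by
  set e₀ : EuclideanSpace ℝ (Fin d) := EuclideanSpace.single ⟨0, hd⟩ (1:ℝ) with he₀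
  have hp2 : (0:ℝ) < p ^ 2 := by positivity
  have h1s : 0 < 1 - n * σ / p ^ 2 := by linarith
  set α : ℝ := 1 / σ - n / p ^ 2 with hαdef
  have hα : 0 < α := by
    rw [hαdef]
    have : n / p ^ 2 < 1 / σ := by
      rw [div_lt_div_iff₀ hp2 hσ]
      have := (div_lt_one hp2).mp hsmall
      nlinarith
    linarith
  have hps : n * σ < p ^ 2 := by
    have := (div_lt_one hp2).mp hsmall
    linarith
  have he₀norm : ‖e₀‖ = 1 := by
    rw [he₀, EuclideanSpace.norm_single]; norm_num
  -- norm of the FT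
  have hFT2 : ∀ k : EuclideanSpace ℝ (Fin d),
      ‖FT d (fun x => Complex.exp (Complex.I * (p : ℂ) * ((x ⟨0, hd⟩ : ℝ) : ℂ)) *
        Complex.exp (((-(σ / 2) * ‖x‖ ^ 2 : ℝ) : ℂ))) k‖ ^ 2
      = σ⁻¹ ^ (d : ℝ) * Real.exp (-‖k - p • e₀‖ ^ 2 / σ) := by
    intro k
    rw [FT_gauss d hd p σ hp hσ k, ← he₀, Complex.norm_real, Real.norm_eq_abs,
      abs_of_nonneg (by positivity), mul_pow, pow_two, pow_two,
      ← Real.rpow_add (by positivity), ← Real.exp_add]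
    congr 1
    · norm_num
    · field_simp
      ring
  -- pointwise bound
  set c : ℝ := 2 * p / σ with hc
  set B : ℝ := σ⁻¹ ^ (d : ℝ) * p ^ (2 * n) * Real.exp (n / p ^ 2 - n - p ^ 2 / σ) with hB
  have hbound : ∀ k : EuclideanSpace ℝ (Fin d),
      (1 + ‖k‖ ^ 2) ^ n * (σ⁻¹ ^ (d : ℝ) * Real.exp (-‖k - p • e₀‖ ^ 2 / σ))
        ≤ B * Real.exp (-α * ‖k‖ ^ 2 + c * ⟪e₀, k⟫) := by
    intro k
    have hkey : (1 + ‖k‖ ^ 2) ^ n ≤ p ^ (2 * n) *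
        Real.exp (n * ((1 + ‖k‖ ^ 2) / p ^ 2 - 1)) := by
      set t : ℝ := (1 + ‖k‖ ^ 2) / p ^ 2 with htdef
      have ht : 0 < t := by positivity
      have h1 : (1 + ‖k‖ ^ 2) = p ^ 2 * t := by rw [htdef]; field_simp
      rw [h1, Real.mul_rpow (by positivity) ht.le,
        show (p^2 : ℝ) ^ (n:ℝ) = p ^ (2*n) by
          rw [← Real.rpow_natCast p 2, ← Real.rpow_mul hp.le]; norm_num]
      gcongr
      calc t ^ n ≤ (Real.exp (t - 1)) ^ n :=
            Real.rpow_le_rpow ht.le (by linarith [Real.add_one_le_exp (t-1)]) hn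
        _ = Real.exp ((t - 1) * n) := (Real.exp_mul _ _).symm
        _ = Real.exp (n * (t - 1)) := by ring_nf
    have hmul := mul_le_mul_of_nonneg_right hkey
      (show (0:ℝ) ≤ σ⁻¹ ^ (d : ℝ) * Real.exp (-‖k - p • e₀‖ ^ 2 / σ) by positivity)
    refine hmul.trans_eq ?_
    have hns : ‖k - p • e₀‖ ^ 2 = ‖k‖ ^ 2 - 2 * p * ⟪e₀, k⟫ + p ^ 2 := by
      rw [norm_sub_sq_real, real_inner_smul_right, norm_smul, he₀norm]
      rw [real_inner_comm]
      simp [abs_of_pos hp]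
      ring
    have heq : Real.exp (n * ((1 + ‖k‖ ^ 2) / p ^ 2 - 1)) * Real.exp (-‖k - p • e₀‖ ^ 2 / σ)
        = Real.exp (n / p ^ 2 - n - p ^ 2 / σ) * Real.exp (-α * ‖k‖ ^ 2 + c * ⟪e₀, k⟫) := by
      rw [← Real.exp_add, ← Real.exp_add]
      congr 1
      rw [hns, hαdef, hc]
      field_simp
      ring
    rw [hB]
    linear_combination (σ⁻¹ ^ (d : ℝ) * p ^ (2 * n)) * heq
  -- assemble
  have hf := fun k => hFT2 k
  rw [sobNormSq]
  have hstep : ∫ k : EuclideanSpace ℝ (Fin d), (1 + ‖k‖ ^ 2) ^ n *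
      ‖FT d (fun x => Complex.exp (Complex.I * (p : ℂ) * ((x ⟨0, hd⟩ : ℝ) : ℂ)) *
        Complex.exp (((-(σ / 2) * ‖x‖ ^ 2 : ℝ) : ℂ))) k‖ ^ 2
      ≤ ∫ k : EuclideanSpace ℝ (Fin d), B * Real.exp (-α * ‖k‖ ^ 2 + c * ⟪e₀, k⟫) := by
    apply integral_mono_of_nonneg
    · filter_upwards with k; positivity
    · exact (gauss_integrable d hα c e₀).const_mul B
    · filter_upwards with k
      rw [hFT2 k]
      exact hbound k
  refine hstep.trans_eq ?_
  rw [integral_const_mul, gauss_real d hα c e₀, he₀norm]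
  -- final arithmetic
  rw [hB, hc]
  have hαval : α = (1 - n * σ / p ^ 2) / σ := by rw [hαdef]; field_simp
  have hq : p ^ 2 - n * σ ≠ 0 := (sub_pos.mpr hps).ne'
  have h1srw : 1 - n * σ / p ^ 2 = (p ^ 2 - n * σ) / p ^ 2 := by
    field_simp
  have hexp : (2 * p / σ) ^ 2 * 1 ^ 2 / (4 * α) =
      p ^ 2 / (σ * (1 - n * σ / p ^ 2)) := by
    rw [hαval, h1srw]
    field_simp
    ring
  rw [hexp]
  rw [Real.div_rpow Real.pi_pos.le hα.le, hαval,
    Real.div_rpow h1s.le hσ.le]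
  have hEXP : Real.exp (n / p ^ 2 - n - p ^ 2 / σ) *
      Real.exp (p ^ 2 / (σ * (1 - n * σ / p ^ 2)))
      = Real.exp (n ^ 2 * σ / (p ^ 2 * (1 - n * σ / p ^ 2)) + n / p ^ 2) := by
    rw [← Real.exp_add]
    congr 1
    rw [h1srw]
    field_simp
    ring
  rw [← hEXP]
  rw [show σ⁻¹ ^ (d:ℝ) = (σ ^ ((d:ℝ)/2) * σ ^ ((d:ℝ)/2))⁻¹ by
      rw [Real.inv_rpow hσ.le, ← Real.rpow_add hσ]
      norm_num]
  rw [show (1 - n * σ / p ^ 2) ^ (-(d:ℝ)/2) = ((1 - n * σ / p ^ 2) ^ ((d:ℝ)/2))⁻¹ by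
      rw [neg_div, Real.rpow_neg h1s.le]]
  have hpos1 : 0 < σ ^ ((d:ℝ)/2) := Real.rpow_pos_of_pos hσ _
  have hpos2 : 0 < (1 - n * σ / p ^ 2) ^ ((d:ℝ)/2) := Real.rpow_pos_of_pos h1s _
  set X := σ ^ ((d:ℝ)/2) with hX
  set Y := (1 - n * σ / p ^ 2) ^ ((d:ℝ)/2) with hY
  field_simp
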